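/- Let P ⊆ ℝ² be finite and let c : Fin m → P be a cycle on P (injective, m ≥ 2). Then the weight of the cycle bounds the cost of its vertex set: max_{p ∈ P} dist(p, convexHull (range c)) ≤ w(c) = max_{i} w(c i, c (i+1 mod m)). -/

import Mathlib

open Set Metric

noncomputable abbrev Pt := EuclideanSpace ℝ (Fin 2)

/-- The planar determinant `det(u,v) = u₁·v₂ − u₂·v₁`. -/
def detv (u v : Pt) : ℝ := u 0 * v 1 - u 1 * v 0

/-- `wgt P a b` : the maximum distance to the segment `[a, b]` among the points of `P`
lying in the closed halfplane to the left of the directed line from `a` to `b`. -/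
noncomputable def wgt (P : Set Pt) (a b : Pt) : ℝ :=
  sSup ((fun q => Metric.infDist q (segment ℝ a b)) ''
    (P ∩ {x : Pt | 0 ≤ detv (b - a) (x - a)}))

lemma sub_coord (x y : Pt) (k : Fin 2) : (x - y) k = x k - y k := rfl

lemma funct_coords (f : Pt →L[ℝ] ℝ) (x : Pt) :
    f x = f (EuclideanSpace.single 0 1) * x 0 + f (EuclideanSpace.single 1 1) * x 1 := by
  have hx : x = x 0 • (EuclideanSpace.single (0 : Fin 2) (1:ℝ) : Pt)
      + x 1 • (EuclideanSpace.single (1 : Fin 2) (1:ℝ) : Pt) := by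
    ext i; fin_cases i <;>
      simp [sub_coord, EuclideanSpace.single_apply]
  conv_lhs => rw [hx]
  simp [mul_comm]

lemma cyclic_no_strict_desc {m : ℕ} [NeZero m] (g : Fin m → ℝ)
    (h : ∀ i, g (i + 1) < g i) : False := by
  haveI : Nonempty (Fin m) := ⟨0⟩
  have h1 : ∑ i : Fin m, g (i + 1) < ∑ i : Fin m, g i :=
    Finset.sum_lt_sum_of_nonempty Finset.univ_nonempty (fun i _ => h i)
  have h2 : ∑ i : Fin m, g (i + 1) = ∑ i : Fin m, g i :=
    Fintype.sum_equiv (Equiv.addRight 1) _ _ (fun i => rfl)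
  linarith

theorem stmt_8 (P : Set Pt) (hPfin : P.Finite) (m : ℕ) (hm : 2 ≤ m)
    (c : Fin m → Pt) (hinj : Function.Injective c) (hc : Set.range c ⊆ P) :
    sSup ((fun q => Metric.infDist q (convexHull ℝ (Set.range c))) '' P) ≤
      sSup (Set.range fun i : Fin m => wgt P (c i) (c (i + ⟨1, by omega⟩))) := by
  haveI : NeZero m := ⟨by omega⟩
  have hj1 : (⟨1, by omega⟩ : Fin m) = 1 := by
    apply Fin.ext
    rw [Fin.val_one']
    exact (Nat.mod_eq_of_lt (by omega)).symm
  set RHS := sSup (Set.range fun i : Fin m => wgt P (c i) (c (i + ⟨1, by omega⟩))) with hRHS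
  have hbddR : BddAbove (Set.range fun i : Fin m => wgt P (c i) (c (i + ⟨1, by omega⟩))) :=
    (Set.finite_range _).bddAbove
  have hbdd : ∀ a b : Pt, BddAbove ((fun q => Metric.infDist q (segment ℝ a b)) ''
      (P ∩ {x : Pt | 0 ≤ detv (b - a) (x - a)})) := fun a b =>
    ((hPfin.inter_of_left _).image _).bddAbove
  -- each wgt along an edge is nonneg
  have hwnn : ∀ i : Fin m, 0 ≤ wgt P (c i) (c (i + 1)) := by
    intro i
    have hmem : Metric.infDist (c i) (segment ℝ (c i) (c (i+1))) ∈
        ((fun q => Metric.infDist q (segment ℝ (c i) (c (i+1)))) ''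
          (P ∩ {x : Pt | 0 ≤ detv (c (i+1) - c i) (x - c i)})) := by
      refine ⟨c i, ⟨hc (Set.mem_range_self i), ?_⟩, rfl⟩
      simp [detv, sub_coord]
    exact le_trans Metric.infDist_nonneg (le_csSup (hbdd _ _) hmem)
  have hwle : ∀ i : Fin m, wgt P (c i) (c (i + 1)) ≤ RHS := by
    intro i
    rw [hRHS]
    have : wgt P (c i) (c (i + 1)) =
        (fun i : Fin m => wgt P (c i) (c (i + ⟨1, by omega⟩))) i := by rw [hj1]
    rw [this]
    exact le_csSup hbddR (Set.mem_range_self i)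
  have hRnn : 0 ≤ RHS := le_trans (hwnn 0) (hwle 0)
  apply Real.sSup_le _ hRnn
  rintro x ⟨p, hp, rfl⟩
  by_cases hcase : ∃ i : Fin m, 0 ≤ detv (c (i+1) - c i) (p - c i)
  · obtain ⟨i, hdet⟩ := hcase
    have hseg : segment ℝ (c i) (c (i+1)) ⊆ convexHull ℝ (Set.range c) :=
      (convex_convexHull ℝ _).segment_subset
        (subset_convexHull ℝ _ (Set.mem_range_self i))
        (subset_convexHull ℝ _ (Set.mem_range_self _))
    have h1 : Metric.infDist p (convexHull ℝ (Set.range c)) ≤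
        Metric.infDist p (segment ℝ (c i) (c (i+1))) :=
      Metric.infDist_le_infDist_of_subset hseg ⟨c i, left_mem_segment ℝ _ _⟩
    have h2 : Metric.infDist p (segment ℝ (c i) (c (i+1))) ≤ wgt P (c i) (c (i+1)) :=
      le_csSup (hbdd _ _) ⟨p, ⟨hp, hdet⟩, rfl⟩
    exact le_trans h1 (le_trans h2 (hwle i))
  · push_neg at hcase
    -- p is strictly to the right of every edge; show p is in the hull
    have hmemhull : p ∈ convexHull ℝ (Set.range c) := by
      by_contra hout
      obtain ⟨f, u, hfu, hup⟩ := geometric_hahn_banach_closed_point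
        (convex_convexHull ℝ (Set.range c))
        ((Set.finite_range c).isClosed_convexHull ℝ) hout
      set A := f (EuclideanSpace.single 0 1) with hA
      set B := f (EuclideanSpace.single 1 1) with hB
      have hα : ∀ i : Fin m, A * (c i 0 - p 0) + B * (c i 1 - p 1) < 0 := by
        intro i
        have h1 : f (c i) < u := hfu (c i) (subset_convexHull ℝ _ (Set.mem_range_self i))
        have h2 := funct_coords f (c i)
        have h3 := funct_coords f p
        have he : A * (c i 0 - p 0) + B * (c i 1 - p 1) = f (c i) - f p := by
          rw [h2, h3]; ring
        rw [he]; linarith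
      have hAB : 0 < A^2 + B^2 := by
        rcases lt_or_eq_of_le (by positivity : (0:ℝ) ≤ A^2 + B^2) with h | h
        · exact h
        · have hA0 : A = 0 := by nlinarith [sq_nonneg A, sq_nonneg B]
          have hB0 : B = 0 := by nlinarith [sq_nonneg A, sq_nonneg B]
          have := hα 0
          rw [hA0, hB0] at this
          linarith
      have hdet : ∀ i : Fin m, detv (c i - p) (c (i+1) - p) < 0 := by
        intro i
        have h := hcase i
        have he : detv (c i - p) (c (i+1) - p) = detv (c (i+1) - c i) (p - c i) := by
          simp only [detv, sub_coord]; ring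
        rw [he]; exact h
      set α : Fin m → ℝ := fun i => A * (c i 0 - p 0) + B * (c i 1 - p 1) with hαdef
      set β : Fin m → ℝ := fun i => -B * (c i 0 - p 0) + A * (c i 1 - p 1) with hβdef
      have hkey : ∀ i : Fin m, α i * β (i+1) - β i * α (i+1) =
          (A^2 + B^2) * detv (c i - p) (c (i+1) - p) := by
        intro i
        simp only [hαdef, hβdef, detv, sub_coord]
        ring
      refine cyclic_no_strict_desc (fun i => β i / α i) (fun i => ?_)
      have hαi : α i < 0 := hα i
      have hαi1 : α (i+1) < 0 := hα (i+1)
      have hmul : α i * β (i+1) < β i * α (i+1) := by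
        have h1 := hkey i
        nlinarith [hdet i, hAB]
      show β (i+1) / α (i+1) < β i / α i
      rw [← neg_div_neg_eq (β (i+1)), ← neg_div_neg_eq (β i),
        div_lt_div_iff₀ (by linarith) (by linarith)]
      nlinarith
    show Metric.infDist p (convexHull ℝ (Set.range c)) ≤ RHS
    rw [Metric.infDist_zero_of_mem hmemhull]
    exact hRnn
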